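/- Let Φ be a finite colour set, 𝒫 ⊆ Φ³ a palette that is (d, ·∙)-dense, and let (V,<) be a linearly ordered finite vertex set with colouring φ : V^(2) → Φ chosen uniformly at random. Then for every η > 0, the probability that the hypergraph H^𝒫_φ fails to be (d, η, ·∙)-dense tends to 0 as |V| → ∞. -/

import Mathlib

open scoped Classical
open Finset

/-- The hypergraph `H^Pal_φ` on `Fin n` is `(d, η, ·∙)`-dense: for all `A ⊆ V` and
`P ⊆ V²` there are at least `d|A||P| − η n³` triples `(a,b,c)` with `a ∈ A`,
`(b,c) ∈ P` and `{a,b,c}` an edge, where `{a,b,c}` is an edge iff its increasing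
enumeration `x < y < z` has colour pattern `(φ(x,y), φ(x,z), φ(y,z)) ∈ Pal`. -/
def PaletteEvDense {Φ : Type*} (Pal : Set (Φ × Φ × Φ)) (n : ℕ)
    (φ : Sym2 (Fin n) → Φ) (d η : ℝ) : Prop :=
  ∀ (A : Finset (Fin n)) (P : Finset (Fin n × Fin n)),
    d * A.card * P.card - η * (n : ℝ) ^ 3 ≤
      (({t : Fin n × Fin n × Fin n | t.1 ∈ A ∧ (t.2.1, t.2.2) ∈ P ∧
          ∃ x y z : Fin n, x < y ∧ y < z ∧
            ({t.1, t.2.1, t.2.2} : Finset (Fin n)) = {x, y, z} ∧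
            (φ s(x, y), φ s(x, z), φ s(y, z)) ∈ Pal}).ncard : ℝ)

/-!
Let `G φ a b c` (`edgeDeviation`) be the indicator that `{a, b, c}` is an edge of `H^Pal_φ`,
centred by its conditional probability given every colour except those of `ab` and `ac`.
Palette density makes that probability at least `d`, so for all `A` and `P` the number of edges
counted is at least `d|A||P| - 3n²` plus the error `∑_{a ∈ A, p ∈ P} G φ a p`. Two
Cauchy–Schwarz steps bound the fourth power of the error by `n⁶ ∑_{a,a'} F(a,a')²`, where
`F(a,a') = ∑_p G φ a p * G φ a' p` (`deviationCorrelation`). Averaging over the colours of `ab`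
and `ac` kills `G φ a b c` while fixing `G φ a b' c'`, `G φ a' b c` and `G φ a' b' c'` when
`a ≠ a'` and `{b', c'}` misses `{b, c}`, so `𝔼 F(a,a')² ≤ 4n³` for `a ≠ a'` and
`𝔼 ∑ F² ≤ 5n⁵`. By Markov's inequality the error exceeds `η n³ / 2` with probability at most
`80 / (η⁴ n)`.
-/

open Function

section UpdateSums

variable {ι Ψ : Type*} [Fintype ι] [DecidableEq ι] [Fintype Ψ]

def updateEquiv (e : ι) : (ι → Ψ) × Ψ ≃ (ι → Ψ) × Ψ where
  toFun p := (update p.1 e p.2, p.1 e)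
  invFun p := (update p.1 e p.2, p.1 e)
  left_inv p := by simp
  right_inv p := by simp

theorem sum_sum_update {M : Type*} [AddCommMonoid M] (e : ι) (f : (ι → Ψ) → M) :
    ∑ φ, ∑ α, f (update φ e α) = Fintype.card Ψ • ∑ φ, f φ := by
  rw [← Fintype.sum_prod_type', Fintype.sum_equiv (updateEquiv e)
    (fun p => f (update p.1 e p.2)) (fun p => f p.1) fun _ => rfl,
    Fintype.sum_prod_type' (fun φ _ => f φ)]
  simp [Finset.smul_sum]

theorem sum_mul_eq_zero_of_sum_sum_update_eq_zero {R : Type*} [CommRing R] [NoZeroDivisors R]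
    [CharZero R] [Nonempty Ψ] {f g : (ι → Ψ) → R} (e₁ e₂ : ι)
    (hg : ∀ φ α β, g (update (update φ e₁ α) e₂ β) = g φ)
    (hf : ∀ φ, ∑ α, ∑ β, f (update (update φ e₁ α) e₂ β) = 0) :
    ∑ φ, f φ * g φ = 0 := by
  have h := calc
    Fintype.card Ψ • Fintype.card Ψ • ∑ φ, f φ * g φ
        = ∑ φ, ∑ α, ∑ β, (f * g) (update (update φ e₁ α) e₂ β) := by
          rw [sum_sum_update e₁ fun ψ => ∑ β, (f * g) (update ψ e₂ β), sum_sum_update e₂]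
          rfl
    _ = 0 := by simp [hg, ← Finset.sum_mul, hf]
  simpa [Fintype.card_ne_zero] using h

end UpdateSums

theorem Finset.card_le_card_sq {α : Type*} [Fintype α] (s : Finset (α × α)) :
    #s ≤ Fintype.card α ^ 2 :=
  (card_le_univ s).trans_eq (by rw [Fintype.card_prod, sq])

section Counting

variable {α : Type*} [Fintype α] [DecidableEq α]

theorem Finset.card_filter_fst_mem_or_snd_mem_le (S : Finset α) :
    #{p : α × α | p.1 ∈ S ∨ p.2 ∈ S} ≤ 2 * #S * Fintype.card α :=
  calc #{p : α × α | p.1 ∈ S ∨ p.2 ∈ S} ≤ #(S ×ˢ univ ∪ univ ×ˢ S) :=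
        card_le_card fun p => by simp
    _ ≤ #(S ×ˢ univ) + #(univ ×ˢ S) := card_union_le _ _
    _ = 2 * #S * Fintype.card α := by rw [card_product, card_product, card_univ]; ring

theorem Finset.card_filter_fst_eq_snd : #{p : α × α | p.1 = p.2} = Fintype.card α := by
  rw [← univ_product_univ, ← diag_eq_filter, diag_card, card_univ]

theorem Finset.card_filter_not_pairwise_ne_le (a : α) :
    #{p : α × α | ¬(a ≠ p.1 ∧ a ≠ p.2 ∧ p.1 ≠ p.2)} ≤ 3 * Fintype.card α := by
  calc #{p : α × α | ¬(a ≠ p.1 ∧ a ≠ p.2 ∧ p.1 ≠ p.2)}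
        ≤ #(({p : α × α | p.1 ∈ ({a} : Finset α) ∨ p.2 ∈ ({a} : Finset α)} : Finset _) ∪
            ({p : α × α | p.1 = p.2} : Finset _)) :=
        card_le_card fun p => by
          simp only [ne_eq, not_and, not_not, mem_filter, mem_univ, true_and, mem_singleton,
            mem_union]
          tauto
    _ ≤ 2 * #{a} * Fintype.card α + Fintype.card α := by
        grw [card_union_le, card_filter_fst_mem_or_snd_mem_le, card_filter_fst_eq_snd]
    _ = 3 * Fintype.card α := by rw [card_singleton]; ring

theorem Finset.card_filter_le_mul_le_sum {ι R : Type*} [Semiring R] [PartialOrder R]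
    [IsOrderedRing R] (s : Finset ι) {f : ι → R} (hf : ∀ i ∈ s, 0 ≤ f i) (t : R) :
    #{i ∈ s | t ≤ f i} * t ≤ ∑ i ∈ s, f i :=
  calc (#{i ∈ s | t ≤ f i} : R) * t = ∑ _i ∈ s with t ≤ f _i, t := by
        rw [sum_const, nsmul_eq_mul]
    _ ≤ ∑ i ∈ s with t ≤ f i, f i := sum_le_sum fun i hi => (mem_filter.mp hi).2
    _ ≤ ∑ i ∈ s, f i :=
        sum_le_sum_of_subset_of_nonneg (filter_subset _ _) fun i hi _ => hf i hi

end Counting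

theorem Sym2.mk_ne_mk_of_mem_of_not_mem {α : Type*} {T : Finset α} {u v a x : α} (hu : u ∈ T)
    (hv : v ∈ T) (h : a ∉ T ∨ x ∉ T) : s(u, v) ≠ s(a, x) := by
  intro heq
  rcases h with h | h
  · rcases Sym2.mem_iff.mp (heq ▸ Sym2.mem_mk_left a x) with rfl | rfl <;> contradiction
  · rcases Sym2.mem_iff.mp (heq ▸ Sym2.mem_mk_right a x) with rfl | rfl <;> contradiction

section PaletteEdges

variable {V Φ : Type*} [LinearOrder V] {Pal : Set (Φ × Φ × Φ)}

variable (Pal) in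
def IsPaletteEdge (φ : Sym2 V → Φ) (a b c : V) : Prop :=
  ∃ x y z : V, x < y ∧ y < z ∧ ({a, b, c} : Finset V) = {x, y, z} ∧
    (φ s(x, y), φ s(x, z), φ s(y, z)) ∈ Pal

theorem eq_of_lt_of_triple_eq {x y z x' y' z' : V} (hxy : x < y) (hyz : y < z)
    (hxy' : x' < y') (hyz' : y' < z') (h : ({x, y, z} : Finset V) = {x', y', z'}) :
    x = x' ∧ y = y' ∧ z = z' := by
  simp only [Finset.ext_iff, mem_insert, mem_singleton] at h
  have := h x; have := h y; have := h z; have := h x'; have := h z'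
  grind

theorem isPaletteEdge_iff_of_lt {φ : Sym2 V → Φ} {a b c x y z : V} (hxy : x < y) (hyz : y < z)
    (h : ({a, b, c} : Finset V) = {x, y, z}) :
    IsPaletteEdge Pal φ a b c ↔ (φ s(x, y), φ s(x, z), φ s(y, z)) ∈ Pal := by
  refine ⟨?_, fun hP => ⟨x, y, z, hxy, hyz, h, hP⟩⟩
  rintro ⟨x', y', z', hxy', hyz', h', hP⟩
  obtain ⟨rfl, rfl, rfl⟩ := eq_of_lt_of_triple_eq hxy' hyz' hxy hyz (h'.symm.trans h)
  exact hP

theorem IsPaletteEdge.ne {φ : Sym2 V → Φ} {a b c : V} (h : IsPaletteEdge Pal φ a b c) :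
    a ≠ b ∧ a ≠ c ∧ b ≠ c := by
  obtain ⟨x, y, z, hxy, hyz, hs, -⟩ := h
  have h3 : #({a, b, c} : Finset V) = 3 :=
    hs ▸ card_eq_three.mpr ⟨x, y, z, hxy.ne, (hxy.trans hyz).ne, hyz.ne, rfl⟩
  refine ⟨?_, ?_, ?_⟩ <;> rintro rfl <;>
    simp only [mem_insert, mem_singleton, true_or, or_true, insert_eq_of_mem] at h3 <;>
    exact absurd (h3.symm.trans_le card_le_two) (by norm_num)

theorem isPaletteEdge_swap {φ : Sym2 V → Φ} {a b c : V} :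
    IsPaletteEdge Pal φ a c b ↔ IsPaletteEdge Pal φ a b c := by
  rw [IsPaletteEdge, IsPaletteEdge, pair_comm]

theorem isPaletteEdge_congr {φ ψ : Sym2 V → Φ} {a b c : V}
    (h : ∀ u ∈ ({a, b, c} : Finset V), ∀ v ∈ ({a, b, c} : Finset V), u ≠ v →
      φ s(u, v) = ψ s(u, v)) :
    IsPaletteEdge Pal φ a b c ↔ IsPaletteEdge Pal ψ a b c := by
  suffices key : ∀ φ ψ : Sym2 V → Φ,
      (∀ u ∈ ({a, b, c} : Finset V), ∀ v ∈ ({a, b, c} : Finset V), u ≠ v → φ s(u, v) = ψ s(u, v)) →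
        IsPaletteEdge Pal φ a b c → IsPaletteEdge Pal ψ a b c from
    ⟨key φ ψ h, key ψ φ fun u hu v hv huv => (h u hu v hv huv).symm⟩
  rintro φ ψ h ⟨x, y, z, hxy, hyz, hs, hP⟩
  have hx : x ∈ ({a, b, c} : Finset V) := hs ▸ by simp
  have hy : y ∈ ({a, b, c} : Finset V) := hs ▸ by simp
  have hz : z ∈ ({a, b, c} : Finset V) := hs ▸ by simp
  refine ⟨x, y, z, hxy, hyz, hs, ?_⟩
  rwa [← h x hx y hy hxy.ne, ← h x hx z hz (hxy.trans hyz).ne, ← h y hy z hz hyz.ne]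

theorem ncard_edges_eq_sum_sum (φ : Sym2 V → Φ) (A : Finset V) (P : Finset (V × V)) :
    ({t : V × V × V | t.1 ∈ A ∧ (t.2.1, t.2.2) ∈ P ∧
        IsPaletteEdge Pal φ t.1 t.2.1 t.2.2}.ncard : ℝ) =
      ∑ a ∈ A, ∑ p ∈ P, if IsPaletteEdge Pal φ a p.1 p.2 then 1 else 0 := by
  have : {t : V × V × V | t.1 ∈ A ∧ (t.2.1, t.2.2) ∈ P ∧ IsPaletteEdge Pal φ t.1 t.2.1 t.2.2} =
      ↑{t ∈ A ×ˢ P | IsPaletteEdge Pal φ t.1 t.2.1 t.2.2} := by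
    ext t
    simp [and_assoc]
  rw [this, Set.ncard_coe_finset, ← sum_boole, sum_product]

end PaletteEdges

section DensePalette

variable {Φ : Type*} [Fintype Φ]

def IsDensePalette (Pal : Set (Φ × Φ × Φ)) (d : ℝ) : Prop :=
  (∀ α : Φ, d * (Fintype.card Φ : ℝ) ^ 2 ≤ {bc : Φ × Φ | (α, bc.1, bc.2) ∈ Pal}.ncard) ∧
  (∀ β : Φ, d * (Fintype.card Φ : ℝ) ^ 2 ≤ {ac : Φ × Φ | (ac.1, β, ac.2) ∈ Pal}.ncard) ∧
  (∀ γ : Φ, d * (Fintype.card Φ : ℝ) ^ 2 ≤ {ab : Φ × Φ | (ab.1, ab.2, γ) ∈ Pal}.ncard)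

theorem IsDensePalette.le_one [Nonempty Φ] {Pal : Set (Φ × Φ × Φ)} {d : ℝ}
    (hP : IsDensePalette Pal d) : d ≤ 1 := by
  have hslice := hP.1 (Classical.arbitrary Φ)
  have hcard : ({bc : Φ × Φ | (Classical.arbitrary Φ, bc.1, bc.2) ∈ Pal}.ncard : ℝ) ≤
      (Fintype.card Φ : ℝ) ^ 2 := by
    have := Set.ncard_le_card {bc : Φ × Φ | (Classical.arbitrary Φ, bc.1, bc.2) ∈ Pal}
    rw [Nat.card_eq_fintype_card, Fintype.card_prod, ← sq] at this
    exact_mod_cast this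
  have hpos : (0 : ℝ) < (Fintype.card Φ : ℝ) ^ 2 := by positivity
  nlinarith

end DensePalette

section Deviation

variable {V Φ : Type*} [LinearOrder V] {Pal : Set (Φ × Φ × Φ)}

variable (Pal) in
noncomputable def completionCount (φ : Sym2 V → Φ) (a b c : V) : ℕ :=
  {p : Φ × Φ | IsPaletteEdge Pal (update (update φ s(a, b) p.1) s(a, c) p.2) a b c}.ncard

variable (Pal) in
noncomputable def completionDensity [Fintype Φ] (φ : Sym2 V → Φ) (a b c : V) : ℝ :=
  completionCount Pal φ a b c / Fintype.card Φ ^ 2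

variable (Pal) in
/-- The edge indicator centred by its conditional expectation given all colours except those
of `ab` and `ac`. -/
noncomputable def edgeDeviation [Fintype Φ] (φ : Sym2 V → Φ) (a b c : V) : ℝ :=
  if a ≠ b ∧ a ≠ c ∧ b ≠ c then
    (if IsPaletteEdge Pal φ a b c then 1 else 0) - completionDensity Pal φ a b c
  else 0

theorem completionCount_update_update {φ : Sym2 V → Φ} {a b c : V} (hbc : b ≠ c) (α β : Φ) :
    completionCount Pal (update (update φ s(a, b) α) s(a, c) β) a b c =
      completionCount Pal φ a b c := by
  have hne : s(a, c) ≠ s(a, b) := fun h => hbc (Sym2.congr_right.mp h).symm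
  simp only [completionCount, update_comm hne, update_idem]

theorem completionCount_update {φ : Sym2 V → Φ} {e : Sym2 V} {u v w : V}
    (h : ∀ y ∈ ({u, v, w} : Finset V), ∀ z ∈ ({u, v, w} : Finset V), s(y, z) ≠ e) (γ : Φ) :
    completionCount Pal (update φ e γ) u v w = completionCount Pal φ u v w := by
  unfold completionCount
  congr 1
  ext p
  exact isPaletteEdge_congr fun y hy z hz _ => by simp [update_apply, h y hy z hz]

theorem completionCount_swap {φ : Sym2 V → Φ} {a b c : V} (hbc : b ≠ c) :
    completionCount Pal φ a c b = completionCount Pal φ a b c := by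
  have hne : s(a, c) ≠ s(a, b) := fun h => hbc (Sym2.congr_right.mp h).symm
  have hswap :
      {p : Φ × Φ | IsPaletteEdge Pal (update (update φ s(a, c) p.1) s(a, b) p.2) a c b} =
        Prod.swap '' {p | IsPaletteEdge Pal (update (update φ s(a, b) p.1) s(a, c) p.2) a b c} := by
    ext ⟨β, α⟩
    simp [Set.image_swap_eq_preimage_swap, isPaletteEdge_swap, update_comm hne]
  rw [completionCount, hswap, Set.ncard_image_of_injective _ Prod.swap_injective,
    completionCount]

theorem IsDensePalette.le_completionCount_of_lt [Fintype Φ] {d : ℝ} (hP : IsDensePalette Pal d)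
    (φ : Sym2 V → Φ) {a b c : V} (hab : a ≠ b) (hac : a ≠ c) (hbc : b < c) :
    d * (Fintype.card Φ : ℝ) ^ 2 ≤ completionCount Pal φ a b c := by
  rcases hab.lt_or_gt with hab' | hba
  · refine (hP.2.2 (φ s(b, c))).trans (Nat.cast_le.mpr (Set.ncard_le_ncard fun p hp => ?_))
    rw [Set.mem_ofPred_eq, isPaletteEdge_iff_of_lt hab' hbc rfl]
    simpa [update_apply, Sym2.eq_iff, hab, hac, hbc.ne, hab.symm, hac.symm, hbc.ne'] using hp
  rcases hac.lt_or_gt with hac' | hca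
  · refine (hP.2.1 (φ s(b, c))).trans (Nat.cast_le.mpr (Set.ncard_le_ncard fun p hp => ?_))
    rw [Set.mem_ofPred_eq, isPaletteEdge_iff_of_lt hba hac' (insert_comm _ _ _)]
    simpa [update_apply, Sym2.eq_iff, hab, hac, hbc.ne, hab.symm, hac.symm, hbc.ne'] using hp
  · have hs : ({a, b, c} : Finset V) = {b, c, a} := by
      ext
      simp only [mem_insert, mem_singleton]
      tauto
    refine (hP.1 (φ s(b, c))).trans (Nat.cast_le.mpr (Set.ncard_le_ncard fun p hp => ?_))
    rw [Set.mem_ofPred_eq, isPaletteEdge_iff_of_lt hbc hca hs]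
    simpa [update_apply, Sym2.eq_iff, hab, hac, hbc.ne, hab.symm, hac.symm, hbc.ne'] using hp

theorem IsDensePalette.le_completionDensity [Fintype Φ] [Nonempty Φ] {d : ℝ}
    (hP : IsDensePalette Pal d) (φ : Sym2 V → Φ) {a b c : V} (hab : a ≠ b) (hac : a ≠ c)
    (hbc : b ≠ c) : d ≤ completionDensity Pal φ a b c := by
  rw [completionDensity, le_div_iff₀ (by positivity)]
  rcases hbc.lt_or_gt with hbc' | hcb
  · exact hP.le_completionCount_of_lt φ hab hac hbc'
  · rw [← completionCount_swap hbc]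
    exact hP.le_completionCount_of_lt φ hac hab hcb

theorem completionDensity_nonneg [Fintype Φ] (φ : Sym2 V → Φ) (a b c : V) :
    0 ≤ completionDensity Pal φ a b c := by
  unfold completionDensity
  positivity

theorem completionDensity_le_one [Fintype Φ] (φ : Sym2 V → Φ) (a b c : V) :
    completionDensity Pal φ a b c ≤ 1 := by
  refine div_le_one_of_le₀ ?_ (by positivity)
  have := Set.ncard_le_card
    {p : Φ × Φ | IsPaletteEdge Pal (update (update φ s(a, b) p.1) s(a, c) p.2) a b c}
  rw [Nat.card_eq_fintype_card, Fintype.card_prod, ← sq] at this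
  exact_mod_cast this

variable [Fintype Φ]

theorem abs_edgeDeviation_le_one (φ : Sym2 V → Φ) (a b c : V) :
    |edgeDeviation Pal φ a b c| ≤ 1 := by
  have h0 := completionDensity_nonneg (Pal := Pal) φ a b c
  have h1 := completionDensity_le_one (Pal := Pal) φ a b c
  unfold edgeDeviation
  split_ifs <;> rw [abs_le] <;> constructor <;> linarith

theorem indicator_isPaletteEdge_eq (φ : Sym2 V → Φ) (a b c : V) :
    (if IsPaletteEdge Pal φ a b c then 1 else 0 : ℝ) =
      edgeDeviation Pal φ a b c +
        if a ≠ b ∧ a ≠ c ∧ b ≠ c then completionDensity Pal φ a b c else 0 := by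
  unfold edgeDeviation
  split_ifs with hE hD hD
  · ring
  · exact absurd hE.ne hD
  · ring
  · ring

theorem edgeDeviation_update {φ : Sym2 V → Φ} {a x u v w : V}
    (h : a ∉ ({u, v, w} : Finset V) ∨ x ∉ ({u, v, w} : Finset V)) (γ : Φ) :
    edgeDeviation Pal (update φ s(a, x) γ) u v w = edgeDeviation Pal φ u v w := by
  have hne : ∀ y ∈ ({u, v, w} : Finset V), ∀ z ∈ ({u, v, w} : Finset V), s(y, z) ≠ s(a, x) :=
    fun y hy z hz => Sym2.mk_ne_mk_of_mem_of_not_mem hy hz h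
  simp only [edgeDeviation, completionDensity, completionCount_update hne,
    isPaletteEdge_congr fun y hy z hz _ => update_of_ne (hne y hy z hz) γ φ]

theorem sum_sum_edgeDeviation_update [Nonempty Φ] (φ : Sym2 V → Φ) {a b c : V} (hab : a ≠ b)
    (hac : a ≠ c) (hbc : b ≠ c) :
    ∑ α, ∑ β, edgeDeviation Pal (update (update φ s(a, b) α) s(a, c) β) a b c = 0 := by
  have hedges : ∑ α, ∑ β,
      (if IsPaletteEdge Pal (update (update φ s(a, b) α) s(a, c) β) a b c then 1 else 0 : ℝ) =
        completionCount Pal φ a b c := by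
    rw [← Fintype.sum_prod_type', sum_boole, completionCount, Set.ncard_eq_toFinset_card',
      Set.toFinset_ofPred]
  simp only [edgeDeviation, if_pos (⟨hab, hac, hbc⟩ : a ≠ b ∧ a ≠ c ∧ b ≠ c),
    completionDensity, completionCount_update_update hbc, sum_sub_distrib, hedges, sum_const,
    card_univ, nsmul_eq_mul]
  field_simp
  ring

end Deviation

section SecondMoment

variable {V Φ : Type*} [LinearOrder V] [Fintype V] [Fintype Φ] {Pal : Set (Φ × Φ × Φ)}

theorem sum_edgeDeviation_mul_eq_zero [Nonempty Φ] {a a' b c b' c' : V} (ha : a ≠ a')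
    (hb' : b' ∉ ({b, c} : Finset V)) (hc' : c' ∉ ({b, c} : Finset V)) :
    ∑ φ : Sym2 V → Φ, edgeDeviation Pal φ a b c * (edgeDeviation Pal φ a b' c' *
      (edgeDeviation Pal φ a' b c * edgeDeviation Pal φ a' b' c')) = 0 := by
  by_cases hT : a ≠ b ∧ a ≠ c ∧ b ≠ c
  swap
  · simp only [edgeDeviation, if_neg hT, zero_mul, sum_const_zero]
  by_cases hT' : a ≠ b' ∧ a ≠ c' ∧ b' ≠ c'
  swap
  · simp only [edgeDeviation, if_neg hT', zero_mul, mul_zero, sum_const_zero]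
  obtain ⟨hab, hac, hbc⟩ := hT
  simp only [mem_insert, mem_singleton, not_or] at hb' hc'
  have hb : b ∉ ({a, b', c'} : Finset V) := by grind
  have hc : c ∉ ({a, b', c'} : Finset V) := by grind
  have ha₁ : a ∉ ({a', b, c} : Finset V) := by grind
  have ha₂ : a ∉ ({a', b', c'} : Finset V) := by grind
  refine sum_mul_eq_zero_of_sum_sum_update_eq_zero s(a, b) s(a, c) (fun φ α β => ?_)
    (sum_sum_edgeDeviation_update · hab hac hbc)
  simp only [edgeDeviation_update (Or.inr hb), edgeDeviation_update (Or.inr hc),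
    edgeDeviation_update (Or.inl ha₁), edgeDeviation_update (Or.inl ha₂)]

variable (Pal) in
noncomputable def deviationCorrelation (φ : Sym2 V → Φ) (a a' : V) : ℝ :=
  ∑ p : V × V, edgeDeviation Pal φ a p.1 p.2 * edgeDeviation Pal φ a' p.1 p.2

theorem abs_deviationCorrelation_le (φ : Sym2 V → Φ) (a a' : V) :
    |deviationCorrelation Pal φ a a'| ≤ (Fintype.card V : ℝ) ^ 2 := by
  refine (abs_sum_le_sum_abs _ _).trans ((sum_le_sum fun p _ => ?_).trans_eq (by
    simp [Fintype.card_prod, sq] : ∑ _p : V × V, (1 : ℝ) = _))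
  rw [abs_mul]
  exact mul_le_one₀ (abs_edgeDeviation_le_one _ _ _ _) (abs_nonneg _)
    (abs_edgeDeviation_le_one _ _ _ _)

theorem sum_edgeDeviation_mul_le [Nonempty Φ] {a a' : V} (ha : a ≠ a') (p p' : V × V) :
    ∑ φ : Sym2 V → Φ, edgeDeviation Pal φ a p.1 p.2 * (edgeDeviation Pal φ a p'.1 p'.2 *
      (edgeDeviation Pal φ a' p.1 p.2 * edgeDeviation Pal φ a' p'.1 p'.2)) ≤
      if p'.1 ∈ ({p.1, p.2} : Finset V) ∨ p'.2 ∈ ({p.1, p.2} : Finset V) then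
        (Fintype.card (Sym2 V → Φ) : ℝ)
      else 0 := by
  split_ifs with h
  · refine (sum_le_sum fun φ _ => ?_).trans_eq (by simp : ∑ _φ : Sym2 V → Φ, (1 : ℝ) = _)
    refine (le_abs_self _).trans ?_
    simp only [abs_mul]
    have := abs_edgeDeviation_le_one (Pal := Pal) φ
    exact mul_le_one₀ (this _ _ _) (by positivity) (mul_le_one₀ (this _ _ _) (by positivity)
      (mul_le_one₀ (this _ _ _) (abs_nonneg _) (this _ _ _)))
  · rw [not_or] at h
    exact (sum_edgeDeviation_mul_eq_zero ha h.1 h.2).le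

theorem sum_deviationCorrelation_sq_le [Nonempty Φ] {a a' : V} (ha : a ≠ a') :
    ∑ φ : Sym2 V → Φ, deviationCorrelation Pal φ a a' ^ 2 ≤
      4 * (Fintype.card V : ℝ) ^ 3 * Fintype.card (Sym2 V → Φ) := by
  set K : ℝ := (Fintype.card (Sym2 V → Φ) : ℝ)
  calc ∑ φ, deviationCorrelation Pal φ a a' ^ 2
        = ∑ p : V × V, ∑ p' : V × V, ∑ φ : Sym2 V → Φ,
            edgeDeviation Pal φ a p.1 p.2 * (edgeDeviation Pal φ a p'.1 p'.2 *
              (edgeDeviation Pal φ a' p.1 p.2 * edgeDeviation Pal φ a' p'.1 p'.2)) := by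
        simp only [sq, deviationCorrelation, sum_mul_sum]
        rw [sum_comm]
        refine sum_congr rfl fun p _ => ?_
        rw [sum_comm]
        exact sum_congr rfl fun p' _ => sum_congr rfl fun φ _ => by ring
    _ ≤ ∑ p : V × V, ∑ p' : V × V,
          if p'.1 ∈ ({p.1, p.2} : Finset V) ∨ p'.2 ∈ ({p.1, p.2} : Finset V) then K else 0 :=
        sum_le_sum fun p _ => sum_le_sum fun p' _ => sum_edgeDeviation_mul_le ha p p'
    _ ≤ ∑ _p : V × V, 4 * (Fintype.card V : ℝ) * K := by
        refine sum_le_sum fun p _ => ?_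
        rw [sum_ite, sum_const_zero, add_zero, sum_const, nsmul_eq_mul]
        gcongr
        have := (card_filter_fst_mem_or_snd_mem_le {p.1, p.2}).trans
          (Nat.mul_le_mul_right _ (Nat.mul_le_mul_left 2 card_le_two))
        exact_mod_cast this
    _ = 4 * (Fintype.card V : ℝ) ^ 3 * K := by
        simp only [sum_const, card_univ, Fintype.card_prod, nsmul_eq_mul]
        push_cast
        ring

end SecondMoment

section Energy

variable {V Φ : Type*} [LinearOrder V] [Fintype V] [Fintype Φ] {Pal : Set (Φ × Φ × Φ)}

variable (Pal) in
noncomputable def correlationEnergy (φ : Sym2 V → Φ) : ℝ :=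
  ∑ r : V × V, deviationCorrelation Pal φ r.1 r.2 ^ 2

theorem sum_correlationEnergy_le [Nonempty Φ] :
    ∑ φ : Sym2 V → Φ, correlationEnergy Pal φ ≤
      5 * (Fintype.card V : ℝ) ^ 5 * Fintype.card (Sym2 V → Φ) := by
  have hcard_off : (#({r : V × V | ¬r.1 = r.2} : Finset (V × V)) : ℝ) ≤
      (Fintype.card V : ℝ) ^ 2 := by
    exact_mod_cast card_le_card_sq _
  have hdiag : ∀ r : V × V, ∑ φ : Sym2 V → Φ, deviationCorrelation Pal φ r.1 r.2 ^ 2 ≤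
      (Fintype.card V : ℝ) ^ 4 * Fintype.card (Sym2 V → Φ) := fun r =>
    calc ∑ φ : Sym2 V → Φ, deviationCorrelation Pal φ r.1 r.2 ^ 2
        ≤ ∑ _φ : Sym2 V → Φ, ((Fintype.card V : ℝ) ^ 2) ^ 2 := sum_le_sum fun φ _ => by
          rw [← sq_abs]
          gcongr
          exact abs_deviationCorrelation_le φ r.1 r.2
      _ = (Fintype.card V : ℝ) ^ 4 * Fintype.card (Sym2 V → Φ) := by
          rw [sum_const, card_univ, nsmul_eq_mul]
          ring
  have hoff : ∀ r ∈ ({r : V × V | ¬r.1 = r.2} : Finset (V × V)),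
      ∑ φ : Sym2 V → Φ, deviationCorrelation Pal φ r.1 r.2 ^ 2 ≤
        4 * (Fintype.card V : ℝ) ^ 3 * Fintype.card (Sym2 V → Φ) :=
    fun r hr => sum_deviationCorrelation_sq_le (mem_filter.mp hr).2
  calc ∑ φ, correlationEnergy Pal φ
        = ∑ r : V × V, ∑ φ : Sym2 V → Φ, deviationCorrelation Pal φ r.1 r.2 ^ 2 := sum_comm
    _ = ∑ r ∈ ({r : V × V | r.1 = r.2} : Finset (V × V)), ∑ φ : Sym2 V → Φ,
            deviationCorrelation Pal φ r.1 r.2 ^ 2 +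
          ∑ r ∈ ({r : V × V | ¬r.1 = r.2} : Finset (V × V)), ∑ φ : Sym2 V → Φ,
            deviationCorrelation Pal φ r.1 r.2 ^ 2 :=
        (sum_filter_add_sum_filter_not _ _ _).symm
    _ ≤ Fintype.card V * ((Fintype.card V : ℝ) ^ 4 * Fintype.card (Sym2 V → Φ)) +
          (Fintype.card V : ℝ) ^ 2 * (4 * (Fintype.card V : ℝ) ^ 3 *
            Fintype.card (Sym2 V → Φ)) := by
        grw [sum_le_card_nsmul _ _ _ fun r _ => hdiag r, sum_le_card_nsmul _ _ _ hoff,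
          nsmul_eq_mul, nsmul_eq_mul, card_filter_fst_eq_snd, hcard_off]
    _ = 5 * (Fintype.card V : ℝ) ^ 5 * Fintype.card (Sym2 V → Φ) := by ring

end Energy

section Deterministic

variable {V Φ : Type*} [LinearOrder V] [Fintype V] [Fintype Φ] {Pal : Set (Φ × Φ × Φ)}

theorem sq_sum_sum_edgeDeviation_le (φ : Sym2 V → Φ) (A : Finset V) (P : Finset (V × V)) :
    (∑ a ∈ A, ∑ p ∈ P, edgeDeviation Pal φ a p.1 p.2) ^ 2 ≤
      (Fintype.card V : ℝ) ^ 2 * ∑ a ∈ A, ∑ a' ∈ A, deviationCorrelation Pal φ a a' := by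
  have hP : (#P : ℝ) ≤ (Fintype.card V : ℝ) ^ 2 := by exact_mod_cast card_le_card_sq P
  rw [sum_comm]
  calc (∑ p ∈ P, ∑ a ∈ A, edgeDeviation Pal φ a p.1 p.2) ^ 2
        ≤ #P * ∑ p ∈ P, (∑ a ∈ A, edgeDeviation Pal φ a p.1 p.2) ^ 2 :=
        sq_sum_le_card_mul_sum_sq
    _ ≤ (Fintype.card V : ℝ) ^ 2 *
          ∑ p : V × V, (∑ a ∈ A, edgeDeviation Pal φ a p.1 p.2) ^ 2 := by
        gcongr
        exact subset_univ P
    _ = (Fintype.card V : ℝ) ^ 2 * ∑ a ∈ A, ∑ a' ∈ A, deviationCorrelation Pal φ a a' := by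
        simp only [sq, sum_mul_sum, deviationCorrelation]
        rw [sum_comm]
        exact congrArg _ (sum_congr rfl fun a _ => sum_comm)

theorem sum_sum_deviationCorrelation_le (φ : Sym2 V → Φ) (A : Finset V) :
    ∑ a ∈ A, ∑ a' ∈ A, deviationCorrelation Pal φ a a' ≤
      ∑ r : V × V, |deviationCorrelation Pal φ r.1 r.2| :=
  calc ∑ a ∈ A, ∑ a' ∈ A, deviationCorrelation Pal φ a a'
        ≤ ∑ r ∈ A ×ˢ A, |deviationCorrelation Pal φ r.1 r.2| := by
        rw [sum_product]
        exact sum_le_sum fun a _ => sum_le_sum fun a' _ => le_abs_self _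
    _ ≤ ∑ r : V × V, |deviationCorrelation Pal φ r.1 r.2| :=
        sum_le_sum_of_subset_of_nonneg (subset_univ _) fun _ _ _ => abs_nonneg _

theorem sq_sum_abs_deviationCorrelation_le (φ : Sym2 V → Φ) :
    (∑ r : V × V, |deviationCorrelation Pal φ r.1 r.2|) ^ 2 ≤
      (Fintype.card V : ℝ) ^ 2 * correlationEnergy Pal φ := by
  refine sq_sum_le_card_mul_sum_sq.trans_eq ?_
  simp [correlationEnergy, Fintype.card_prod, sq]

theorem abs_sum_sum_edgeDeviation_le {ε : ℝ} (hε : 0 ≤ ε) {φ : Sym2 V → Φ}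
    (hφ : correlationEnergy Pal φ ≤ ε ^ 4 * (Fintype.card V : ℝ) ^ 6) (A : Finset V)
    (P : Finset (V × V)) :
    |∑ a ∈ A, ∑ p ∈ P, edgeDeviation Pal φ a p.1 p.2| ≤ ε * (Fintype.card V : ℝ) ^ 3 := by
  set n : ℝ := (Fintype.card V : ℝ)
  set T := ∑ a ∈ A, ∑ p ∈ P, edgeDeviation Pal φ a p.1 p.2
  set S := ∑ r : V × V, |deviationCorrelation Pal φ r.1 r.2|
  have hT : T ^ 2 ≤ n ^ 2 * S := (sq_sum_sum_edgeDeviation_le φ A P).trans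
    (mul_le_mul_of_nonneg_left (sum_sum_deviationCorrelation_le φ A) (by positivity))
  refine le_of_pow_le_pow_left₀ four_ne_zero (by positivity) ?_
  calc |T| ^ 4 = (T ^ 2) ^ 2 := by rw [← pow_mul, pow_abs, abs_of_nonneg (by positivity)]
    _ ≤ (n ^ 2 * S) ^ 2 := pow_le_pow_left₀ (sq_nonneg T) hT 2
    _ = n ^ 4 * S ^ 2 := by ring
    _ ≤ n ^ 4 * (n ^ 2 * (ε ^ 4 * n ^ 6)) := by
        grw [sq_sum_abs_deviationCorrelation_le φ, hφ]
    _ = (ε * n ^ 3) ^ 4 := by ring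

theorem IsDensePalette.sum_sum_completionDensity_ge [Nonempty Φ] {d : ℝ}
    (hP : IsDensePalette Pal d) (φ : Sym2 V → Φ) (A : Finset V) (P : Finset (V × V)) :
    d * #A * #P - 3 * (Fintype.card V : ℝ) ^ 2 ≤
      ∑ a ∈ A, ∑ p ∈ P,
        if a ≠ p.1 ∧ a ≠ p.2 ∧ p.1 ≠ p.2 then completionDensity Pal φ a p.1 p.2 else 0 := by
  have hA : (#A : ℝ) ≤ Fintype.card V := by exact_mod_cast card_le_univ A
  have hdeg : ∀ a : V, (#{p ∈ P | ¬(a ≠ p.1 ∧ a ≠ p.2 ∧ p.1 ≠ p.2)} : ℝ) ≤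
      3 * Fintype.card V := fun a => by
    exact_mod_cast (card_le_card (filter_subset_filter _ (subset_univ P))).trans
      (card_filter_not_pairwise_ne_le a)
  calc d * #A * #P - 3 * (Fintype.card V : ℝ) ^ 2 ≤
        ∑ _a ∈ A, (d * #P - 3 * Fintype.card V) := by
        rw [sum_const, nsmul_eq_mul]
        nlinarith [(Nat.cast_nonneg (Fintype.card V) : (0 : ℝ) ≤ _)]
    _ ≤ ∑ a ∈ A, ∑ p ∈ P, (d - if ¬(a ≠ p.1 ∧ a ≠ p.2 ∧ p.1 ≠ p.2) then 1 else 0) := by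
        refine sum_le_sum fun a _ => ?_
        rw [sum_sub_distrib, sum_const, nsmul_eq_mul, sum_boole]
        linarith [hdeg a]
    _ ≤ _ := by
        refine sum_le_sum fun a _ => sum_le_sum fun p _ => ?_
        by_cases hD : a ≠ p.1 ∧ a ≠ p.2 ∧ p.1 ≠ p.2
        · rw [if_neg (not_not_intro hD), if_pos hD]
          linarith [hP.le_completionDensity φ hD.1 hD.2.1 hD.2.2]
        · rw [if_pos hD, if_neg hD]
          linarith [hP.le_one]

theorem IsDensePalette.sum_sum_indicator_isPaletteEdge_ge [Nonempty Φ] {d η : ℝ}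
    (hP : IsDensePalette Pal d) (hη : 6 ≤ η * Fintype.card V) {φ : Sym2 V → Φ}
    (hφ : correlationEnergy Pal φ ≤ (η / 2) ^ 4 * (Fintype.card V : ℝ) ^ 6) (A : Finset V)
    (P : Finset (V × V)) :
    d * #A * #P - η * (Fintype.card V : ℝ) ^ 3 ≤
      ∑ a ∈ A, ∑ p ∈ P, if IsPaletteEdge Pal φ a p.1 p.2 then 1 else 0 := by
  have hη₀ : 0 ≤ η := by
    by_contra! h
    nlinarith [(Nat.cast_nonneg (Fintype.card V) : (0 : ℝ) ≤ _)]
  have hdev := (abs_le.mp (abs_sum_sum_edgeDeviation_le (by positivity) hφ A P)).1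
  have hdens := hP.sum_sum_completionDensity_ge φ A P
  have hsmall : 3 * (Fintype.card V : ℝ) ^ 2 ≤ η / 2 * (Fintype.card V : ℝ) ^ 3 := by
    nlinarith [sq_nonneg (Fintype.card V : ℝ)]
  simp only [indicator_isPaletteEdge_eq, sum_add_distrib]
  linarith

end Deterministic

section RandomColouring

variable {Φ : Type*} [Fintype Φ] [Nonempty Φ] {Pal : Set (Φ × Φ × Φ)} {d η : ℝ}

theorem IsDensePalette.paletteEvDense (hP : IsDensePalette Pal d) {n : ℕ} (hn : 6 ≤ η * n)
    {φ : Sym2 (Fin n) → Φ} (hφ : correlationEnergy Pal φ ≤ (η / 2) ^ 4 * (n : ℝ) ^ 6) :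
    PaletteEvDense Pal n φ d η := fun A P => by
  have := hP.sum_sum_indicator_isPaletteEdge_ge (by simpa using hn) (by simpa using hφ) A P
  rw [Fintype.card_fin] at this
  exact this.trans_eq (ncard_edges_eq_sum_sum φ A P).symm

theorem IsDensePalette.card_not_paletteEvDense_le (hP : IsDensePalette Pal d) (hη : 0 < η)
    {n : ℕ} (hn : 6 ≤ η * n) :
    (#{φ : Sym2 (Fin n) → Φ | ¬PaletteEvDense Pal n φ d η} : ℝ) ≤
      80 / η ^ 4 / n * Fintype.card (Sym2 (Fin n) → Φ) := by
  have hn₀ : (0 : ℝ) < n := (mul_pos_iff_of_pos_left hη).mp (by linarith)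
  set t : ℝ := (η / 2) ^ 4 * (n : ℝ) ^ 6
  have hsub : ({φ : Sym2 (Fin n) → Φ | ¬PaletteEvDense Pal n φ d η} : Finset _) ⊆
      ({φ : Sym2 (Fin n) → Φ | t ≤ correlationEnergy Pal φ} : Finset _) := fun φ => by
    simp only [mem_filter, mem_univ, true_and]
    exact fun h => (not_le.mp (mt (hP.paletteEvDense hn) h)).le
  have hmarkov := card_filter_le_mul_le_sum (univ : Finset (Sym2 (Fin n) → Φ))
    (f := correlationEnergy Pal) (fun φ _ => sum_nonneg fun _ _ => sq_nonneg _) t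
  have henergy := sum_correlationEnergy_le (V := Fin n) (Pal := Pal)
  rw [Fintype.card_fin] at henergy
  calc (#{φ : Sym2 (Fin n) → Φ | ¬PaletteEvDense Pal n φ d η} : ℝ)
      ≤ #{φ : Sym2 (Fin n) → Φ | t ≤ correlationEnergy Pal φ} := by
        exact_mod_cast card_le_card hsub
    _ ≤ 5 * (n : ℝ) ^ 5 * Fintype.card (Sym2 (Fin n) → Φ) / t := by
        rw [le_div_iff₀ (by positivity)]
        linarith
    _ = 80 / η ^ 4 / n * Fintype.card (Sym2 (Fin n) → Φ) := by
        simp only [t]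
        field_simp
        ring

end RandomColouring

/-- If the palette `Pal ⊆ Φ³` is `(d, ·∙)`-dense, then for every `η > 0` the probability
(under a uniformly random colouring `φ` of the pairs of `Fin n`) that `H^Pal_φ` fails to
be `(d, η, ·∙)`-dense tends to `0` as `n → ∞`. -/
theorem random_palette_hypergraph_evDense {Φ : Type} [Fintype Φ] [Nonempty Φ]
    (Pal : Set (Φ × Φ × Φ)) (d : ℝ)
    (h1 : ∀ α : Φ, d * ((Fintype.card Φ : ℝ)) ^ 2 ≤
      (({bc : Φ × Φ | (α, bc.1, bc.2) ∈ Pal}).ncard : ℝ))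
    (h2 : ∀ β : Φ, d * ((Fintype.card Φ : ℝ)) ^ 2 ≤
      (({ac : Φ × Φ | (ac.1, β, ac.2) ∈ Pal}).ncard : ℝ))
    (h3 : ∀ γ : Φ, d * ((Fintype.card Φ : ℝ)) ^ 2 ≤
      (({ab : Φ × Φ | (ab.1, ab.2, γ) ∈ Pal}).ncard : ℝ))
    (η : ℝ) (hη : 0 < η) :
    Filter.Tendsto
      (fun n =>
        ((((Finset.univ : Finset (Sym2 (Fin n) → Φ)).filter
            (fun φ => ¬ PaletteEvDense Pal n φ d η)).card : ℝ) /
          ((Fintype.card (Sym2 (Fin n) → Φ) : ℝ))))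
      Filter.atTop (nhds 0) := by
  have hP : IsDensePalette Pal d := ⟨h1, h2, h3⟩
  refine squeeze_zero' (Filter.Eventually.of_forall fun n => by positivity) ?_
    (tendsto_const_div_atTop_nhds_zero_nat (80 / η ^ 4))
  filter_upwards [Filter.eventually_ge_atTop ⌈6 / η⌉₊] with n hn
  rw [div_le_iff₀ (by positivity)]
  exact hP.card_not_paletteEvDense_le hη ((div_le_iff₀' hη).mp (Nat.ceil_le.mp hn))
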